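/- arXiv:1005.2496 — 2 statements merged into one kernel-verified Lean document; each statement's English description precedes it below -/
import Mathlib

section
/- Let H be a Hopf quasigroup and M a Long H-dimodule. Then for all h ∈ H and m ∈ M: ρ^M(h·(S(m⁽¹⁾)·m⁽⁰⁾)) = h·(S(m⁽¹⁾₍₂₎)·m⁽⁰⁾) ⊗ m⁽¹⁾₍₁₎. -/
open TensorProduct

/-- A Hopf quasigroup over a field `k`: a unital (not necessarily associative) algebra
and coassociative counital coalgebra, with `comul` and `counit` algebra maps, together
with an antipode `antipode` satisfying
`S(h₁)(h₂g) = h₁(S(h₂)g) = (gh₁)S(h₂) = (gS(h₁))h₂ = ε(h)g`. -/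
structure HopfQuasigroup (k : Type*) [Field k] (H : Type*) [AddCommMonoid H] [Module k H] where
  mul : H →ₗ[k] H →ₗ[k] H
  one : H
  comul : H →ₗ[k] H ⊗[k] H
  counit : H →ₗ[k] k
  antipode : H →ₗ[k] H
  one_mul : ∀ h, mul one h = h
  mul_one : ∀ h, mul h one = h
  coassoc : ∀ h, (TensorProduct.assoc k H H H) ((comul.rTensor H) (comul h))
      = (LinearMap.lTensor H comul) (comul h)
  counit_comul : ∀ h, (TensorProduct.lid k H) ((counit.rTensor H) (comul h)) = h
  comul_counit : ∀ h, (TensorProduct.rid k H) ((LinearMap.lTensor H counit) (comul h)) = h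
  counit_one : counit one = 1
  counit_mul : ∀ a b, counit (mul a b) = counit a * counit b
  comul_one : comul one = one ⊗ₜ[k] one
  comul_mul : ∀ a b, comul (mul a b)
      = (TensorProduct.map (TensorProduct.lift mul) (TensorProduct.lift mul))
          ((TensorProduct.tensorTensorTensorComm k H H H H) ((comul a) ⊗ₜ[k] (comul b)))
  -- `S(h₁)(h₂ g) = ε(h) g`
  antipode_mul_left : ∀ g h,
      TensorProduct.lift ((mul.comp antipode).compl₂ (mul.flip g)) (comul h) = counit h • g
  -- `h₁(S(h₂) g) = ε(h) g`
  mul_antipode_left : ∀ g h,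
      TensorProduct.lift (mul.compl₂ ((mul.comp antipode).flip g)) (comul h) = counit h • g
  -- `(g h₁)S(h₂) = ε(h) g`
  antipode_mul_right : ∀ g h,
      TensorProduct.lift ((mul.comp (mul g)).compl₂ antipode) (comul h) = counit h • g
  -- `(g S(h₁))h₂ = ε(h) g`
  mul_antipode_right : ∀ g h,
      TensorProduct.lift (mul.comp ((mul g).comp antipode)) (comul h) = counit h • g

variable {k H : Type*} [Field k] [AddCommMonoid H] [Module k H]

/-- A left quasimodule over a Hopf quasigroup: `1·m = m` and
`h₁·(S(h₂)·m) = ε(h)m = S(h₁)·(h₂·m)`. -/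
structure LeftQuasimodule (hq : HopfQuasigroup k H) (M : Type*)
    [AddCommMonoid M] [Module k M] where
  act : H →ₗ[k] M →ₗ[k] M
  act_one : ∀ m, act hq.one m = m
  -- `h₁·(S(h₂)·m) = ε(h) m`
  act_antipode : ∀ h m,
      TensorProduct.lift (act.compl₂ ((act.comp hq.antipode).flip m)) (hq.comul h)
        = hq.counit h • m
  -- `S(h₁)·(h₂·m) = ε(h) m`
  antipode_act : ∀ h m,
      TensorProduct.lift ((act.comp hq.antipode).compl₂ (act.flip m)) (hq.comul h)
        = hq.counit h • m

/-- A counital coassociative right comodule over a Hopf quasigroup. -/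
structure RightComodule (hq : HopfQuasigroup k H) (M : Type*)
    [AddCommMonoid M] [Module k M] where
  coact : M →ₗ[k] M ⊗[k] H
  coassoc : ∀ m, (TensorProduct.assoc k M H H) ((coact.rTensor H) (coact m))
      = (LinearMap.lTensor M hq.comul) (coact m)
  coact_counit : ∀ m, (TensorProduct.rid k M) ((LinearMap.lTensor M hq.counit) (coact m)) = m

/-- A Long dimodule over a Hopf quasigroup: a left quasimodule and a counital
coassociative right comodule such that `(h·m)⁽⁰⁾⊗(h·m)⁽¹⁾ = h·m⁽⁰⁾⊗m⁽¹⁾`. -/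
structure LongDimodule (hq : HopfQuasigroup k H) (M : Type*)
    [AddCommMonoid M] [Module k M] extends LeftQuasimodule hq M, RightComodule hq M where
  compat : ∀ h m, coact (act h m) = ((act h).rTensor H) (coact m)


/-- The map `m ⊗ h ↦ S(h)·m`. -/
noncomputable def sAct {hq : HopfQuasigroup k H} {M : Type*} [AddCommMonoid M] [Module k M]
    (ld : LongDimodule hq M) : M ⊗[k] H →ₗ[k] M :=
  TensorProduct.lift (ld.act.comp hq.antipode).flip

/-- The element `S(m⁽¹⁾₍₂₎)·m⁽⁰⁾ ⊗ m⁽¹⁾₍₁₎` of `M ⊗ H`. -/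
noncomputable def twistedCoact {hq : HopfQuasigroup k H} {M : Type*}
    [AddCommMonoid M] [Module k M] (ld : LongDimodule hq M) (m : M) : M ⊗[k] H :=
  ((sAct ld).rTensor H) ((TensorProduct.assoc k M H H).symm
    ((LinearMap.lTensor M (((TensorProduct.comm k H H).toLinearMap).comp hq.comul))
      (ld.coact m)))

/-- The composite map `Θ : (M⊗H)⊗H → M⊗H`, `(n⊗a)⊗b ↦ S(b)·n ⊗ a`. -/
noncomputable def thetaMap {hq : HopfQuasigroup k H} {M : Type*}
    [AddCommMonoid M] [Module k M] (ld : LongDimodule hq M) :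
    (M ⊗[k] H) ⊗[k] H →ₗ[k] M ⊗[k] H :=
  ((sAct ld).rTensor H).comp
    (((TensorProduct.assoc k M H H).symm.toLinearMap).comp
      ((LinearMap.lTensor M (TensorProduct.comm k H H).toLinearMap).comp
        (TensorProduct.assoc k M H H).toLinearMap))

lemma thetaMap_tmul {hq : HopfQuasigroup k H} {M : Type*}
    [AddCommMonoid M] [Module k M] (ld : LongDimodule hq M) (y : M ⊗[k] H) (b : H) :
    thetaMap ld (y ⊗ₜ[k] b) = ((ld.act (hq.antipode b)).rTensor H) y := by
  induction y using TensorProduct.induction_on with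
  | zero => simp
  | tmul n a =>
      simp [thetaMap, sAct]
  | add u v hu hv =>
      have : (u + v) ⊗ₜ[k] b = u ⊗ₜ[k] b + v ⊗ₜ[k] b := TensorProduct.add_tmul u v b
      rw [this, map_add, hu, hv, map_add]

lemma coact_sAct {hq : HopfQuasigroup k H} {M : Type*}
    [AddCommMonoid M] [Module k M] (ld : LongDimodule hq M) (x : M ⊗[k] H) :
    ld.coact (sAct ld x) = thetaMap ld ((ld.coact.rTensor H) x) := by
  induction x using TensorProduct.induction_on with
  | zero => simp
  | tmul n b =>
      have h1 : sAct ld (n ⊗ₜ[k] b) = ld.act (hq.antipode b) n := by simp [sAct]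
      rw [h1, ld.compat, LinearMap.rTensor_tmul, thetaMap_tmul]
  | add u v hu hv => rw [map_add, map_add, hu, hv, map_add, map_add]

lemma coact_sAct_coact {hq : HopfQuasigroup k H} {M : Type*}
    [AddCommMonoid M] [Module k M] (ld : LongDimodule hq M) (m : M) :
    ld.coact (sAct ld (ld.coact m)) = twistedCoact ld m := by
  rw [coact_sAct]
  have hcoassoc := ld.coassoc m
  have : (LinearMap.lTensor M (((TensorProduct.comm k H H).toLinearMap).comp hq.comul))
      (ld.coact m)
      = (LinearMap.lTensor M (TensorProduct.comm k H H).toLinearMap)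
          ((TensorProduct.assoc k M H H) ((ld.coact.rTensor H) (ld.coact m))) := by
    rw [LinearMap.lTensor_comp, LinearMap.comp_apply, hcoassoc]
  simp only [twistedCoact, this, thetaMap, LinearMap.comp_apply]
  rfl

/-- For a Long dimodule `M` over a Hopf quasigroup `H`:
`ρ^M(h·(S(m⁽¹⁾)·m⁽⁰⁾)) = h·(S(m⁽¹⁾₍₂₎)·m⁽⁰⁾) ⊗ m⁽¹⁾₍₁₎`. -/
theorem longDimodule_coact_act_sAct {hq : HopfQuasigroup k H} {M : Type*}
    [AddCommMonoid M] [Module k M] (ld : LongDimodule hq M) (h : H) (m : M) :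
    ld.coact (ld.act h (sAct ld (ld.coact m)))
      = ((ld.act h).rTensor H) (twistedCoact ld m) := by
  rw [ld.compat, coact_sAct_coact]
end

section
/- Let L be a loop and {X_a | a ∈ L} a family of L-sets. Then M = ⊕_{a∈L} kX_a is a Long dimodule over the Hopf quasigroup kL, where the action is the direct sum of the linearized L-actions and the coaction on kX_a is x ↦ x⊗a. -/
open TensorProduct

set_option synthInstance.maxHeartbeats 400000
set_option maxHeartbeats 1000000

variable {k H : Type*} [Field k] [AddCommMonoid H] [Module k H]

/-- A loop: a set with a binary operation, a two-sided neutral element, and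
two-sided inverses satisfying `a(a⁻¹b) = a⁻¹(ab) = (ba⁻¹)a = (ba)a⁻¹ = b`. -/
class Loop (L : Type*) extends Mul L, One L, Inv L where
  one_mul : ∀ a : L, 1 * a = a
  mul_one : ∀ a : L, a * 1 = a
  mul_inv_mul : ∀ a b : L, a * (a⁻¹ * b) = b
  inv_mul_mul : ∀ a b : L, a⁻¹ * (a * b) = b
  mul_inv_mul' : ∀ a b : L, (b * a⁻¹) * a = b
  mul_mul_inv : ∀ a b : L, (b * a) * a⁻¹ = b

variable {k : Type*} [Field k] {L : Type*} [Loop L]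

/-- The linearised multiplication of the loop `L` on `kL = L →₀ k`. -/
noncomputable def loopMul (k : Type*) [Field k] (L : Type*) [Loop L] :
    (L →₀ k) →ₗ[k] (L →₀ k) →ₗ[k] (L →₀ k) :=
  Finsupp.lsum k fun a => LinearMap.toSpanSingleton k ((L →₀ k) →ₗ[k] (L →₀ k))
    (Finsupp.lmapDomain k k (fun b => a * b))

/-- The grouplike coproduct `Δ(a) = a ⊗ a` on `kL`. -/
noncomputable def loopComul (k : Type*) [Field k] (L : Type*) [Loop L] :
    (L →₀ k) →ₗ[k] (L →₀ k) ⊗[k] (L →₀ k) :=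
  Finsupp.lsum k fun a => LinearMap.toSpanSingleton k ((L →₀ k) ⊗[k] (L →₀ k))
    (Finsupp.single a 1 ⊗ₜ[k] Finsupp.single a 1)

/-- The counit `ε(a) = 1` on `kL`. -/
noncomputable def loopCounit (k : Type*) [Field k] (L : Type*) [Loop L] :
    (L →₀ k) →ₗ[k] k :=
  Finsupp.lsum k fun _ => LinearMap.id

/-- The antipode `S(a) = a⁻¹` on `kL`. -/
noncomputable def loopAntipode (k : Type*) [Field k] (L : Type*) [Loop L] :
    (L →₀ k) →ₗ[k] (L →₀ k) :=
  Finsupp.lmapDomain k k (fun a : L => a⁻¹)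


/-- The linearised action of `kL` on `M = ⊕_{a∈L} kX_a = k(Σ a, X a)` induced by a family
of `L`-actions. -/
noncomputable def familyActLin (k : Type*) [Field k] (L : Type*) [Loop L]
    {X : L → Type*} (acts : ∀ a : L, L → X a → X a) :
    (L →₀ k) →ₗ[k] ((Σ a : L, X a) →₀ k) →ₗ[k] ((Σ a : L, X a) →₀ k) :=
  Finsupp.lsum k fun g => LinearMap.toSpanSingleton k _
    (Finsupp.lmapDomain k k (fun p : Σ a : L, X a => ⟨p.1, acts p.1 g p.2⟩))

/-- The coaction on `M = ⊕_{a∈L} kX_a` given on `kX_a` by `x ↦ x ⊗ a`. -/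
noncomputable def familyCoactLin (k : Type*) [Field k] (L : Type*) [Loop L]
    (X : L → Type*) :
    ((Σ a : L, X a) →₀ k) →ₗ[k] ((Σ a : L, X a) →₀ k) ⊗[k] (L →₀ k) :=
  Finsupp.lsum k fun p : Σ a : L, X a => LinearMap.toSpanSingleton k _
    (Finsupp.single p (1 : k) ⊗ₜ[k] Finsupp.single p.1 (1 : k))


section Aux
variable {k : Type*} [Field k] {L : Type*} [Loop L]

@[simp] theorem loopMul_single (a b : L) (c d : k) :
    loopMul k L (Finsupp.single a c) (Finsupp.single b d)
      = Finsupp.single (a * b) (c * d) := by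
  simp [loopMul, Finsupp.mapDomain_single, Finsupp.smul_single, smul_eq_mul]

@[simp] theorem loopComul_single (a : L) (c : k) :
    loopComul k L (Finsupp.single a c)
      = c • (Finsupp.single a (1:k) ⊗ₜ[k] Finsupp.single a (1:k)) := by
  simp [loopComul]

@[simp] theorem loopCounit_single (a : L) (c : k) :
    loopCounit k L (Finsupp.single a c) = c := by
  simp [loopCounit]

@[simp] theorem loopAntipode_single (a : L) (c : k) :
    loopAntipode k L (Finsupp.single a c) = Finsupp.single a⁻¹ c := by
  simp [loopAntipode, Finsupp.mapDomain_single]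

@[simp] theorem familyActLin_single {X : L → Type*} (acts : ∀ a : L, L → X a → X a)
    (g : L) (c : k) (p : Σ a : L, X a) (d : k) :
    familyActLin k L acts (Finsupp.single g c) (Finsupp.single p d)
      = Finsupp.single ⟨p.1, acts p.1 g p.2⟩ (c * d) := by
  simp [familyActLin, Finsupp.mapDomain_single, Finsupp.smul_single, smul_eq_mul]

@[simp] theorem familyCoactLin_single {X : L → Type*} (p : Σ a : L, X a) (c : k) :
    familyCoactLin k L X (Finsupp.single p c)
      = c • (Finsupp.single p (1:k) ⊗ₜ[k] Finsupp.single p.1 (1:k)) := by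
  simp [familyCoactLin]

end Aux

/-- Let `L` be a loop and `{X_a | a ∈ L}` a family of `L`-sets. Then
`M = ⊕_{a∈L} kX_a` is a Long dimodule over the Hopf quasigroup `kL`, with the direct sum
of the linearised `L`-actions and the coaction given on `kX_a` by `x ↦ x ⊗ a`. -/
theorem family_of_lSets_longDimodule (k : Type*) [Field k] (L : Type*) [Loop L]
    {X : L → Type*} (acts : ∀ a : L, L → X a → X a)
    (hone : ∀ (a : L) (x : X a), acts a 1 x = x)
    (hinv : ∀ (a b : L) (x : X a),
      acts a b⁻¹ (acts a b x) = x ∧ acts a b (acts a b⁻¹ x) = x)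
    (hq : HopfQuasigroup k (L →₀ k))
    (hmul : hq.mul = loopMul k L) (hone' : hq.one = Finsupp.single (1 : L) (1 : k))
    (hcomul : hq.comul = loopComul k L) (hcounit : hq.counit = loopCounit k L)
    (hantipode : hq.antipode = loopAntipode k L) :
    ∃ ld : LongDimodule hq ((Σ a : L, X a) →₀ k),
      ld.act = familyActLin k L acts ∧ ld.coact = familyCoactLin k L X := by
  classical
  refine ⟨{ act := familyActLin k L acts
            coact := familyCoactLin k L X
            act_one := ?_
            act_antipode := ?_
            antipode_act := ?_
            coassoc := ?_
            coact_counit := ?_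
            compat := ?_ }, rfl, rfl⟩
  · intro m
    rw [hone']
    induction m using Finsupp.induction_linear with
    | zero => simp
    | add f g hf hg => simp [hf, hg]
    | single p d => simp [hone]
  · intro h m
    rw [hcomul, hcounit, hantipode]
    induction h using Finsupp.induction_linear with
    | zero => simp
    | add f g hf hg => simp [add_smul, hf, hg]
    | single a c =>
      induction m using Finsupp.induction_linear with
      | zero => simp
      | add f g hf hg =>
        simp only [map_add, smul_add, LinearMap.compl₂_apply, LinearMap.flip_apply,
          LinearMap.comp_apply, loopComul_single, loopCounit_single, map_smul,
          TensorProduct.lift.tmul, LinearMap.smul_apply, LinearMap.add_apply] at hf hg ⊢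
        rw [hf, hg]
      | single p d =>
        simp [TensorProduct.lift.tmul, (hinv p.1 a p.2).2]
  · intro h m
    rw [hcomul, hcounit, hantipode]
    induction h using Finsupp.induction_linear with
    | zero => simp
    | add f g hf hg => simp [add_smul, hf, hg]
    | single a c =>
      induction m using Finsupp.induction_linear with
      | zero => simp
      | add f g hf hg =>
        simp only [map_add, smul_add, LinearMap.compl₂_apply, LinearMap.flip_apply,
          LinearMap.comp_apply, loopComul_single, loopCounit_single, map_smul,
          TensorProduct.lift.tmul, LinearMap.smul_apply, LinearMap.add_apply] at hf hg ⊢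
        rw [hf, hg]
      | single p d =>
        simp [TensorProduct.lift.tmul, (hinv p.1 a p.2).1]
  · intro m
    rw [hcomul]
    induction m using Finsupp.induction_linear with
    | zero => simp
    | add f g hf hg => simp [hf, hg]
    | single p d => simp [TensorProduct.smul_tmul']
  · intro m
    rw [hcounit]
    induction m using Finsupp.induction_linear with
    | zero => rw [LinearMap.map_zero, LinearMap.map_zero, LinearEquiv.map_zero]
    | add f g hf hg => rw [LinearMap.map_add, LinearMap.map_add, LinearEquiv.map_add, hf, hg]
    | single p d =>
      rw [familyCoactLin_single, LinearMap.map_smul, LinearEquiv.map_smul,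
        LinearMap.lTensor_tmul, loopCounit_single, TensorProduct.rid_tmul, one_smul,
        Finsupp.smul_single, smul_eq_mul, mul_one]
  · intro h m
    induction h using Finsupp.induction_linear with
    | zero => simp
    | add f g hf hg => simp [hf, hg]
    | single a c =>
      induction m using Finsupp.induction_linear with
      | zero => simp
      | add f g hf hg => simp [hf, hg]
      | single p d =>
        simp only [familyActLin_single, familyCoactLin_single, map_smul,
          LinearMap.rTensor_tmul, TensorProduct.smul_tmul', Finsupp.smul_single,
          smul_eq_mul, mul_one, one_mul, mul_comm]
end
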